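/- arXiv:1906.05593 — 3 statements merged into one kernel-verified Lean document; each statement's English description precedes it below -/
import Mathlib

section
/- If (A, f) is a final object in the category of coalgebras of an endofunctor F : C → C (objects are pairs (A, f) with f : A → F(A), morphisms h : (A,f) → (A',f') are h : A → A' with F(h) ∘ f = f' ∘ h), then f is an isomorphism. -/
open CategoryTheory

/-- Lambek's theorem: if `(A, f)` is a final object in the category of
coalgebras of an endofunctor `F : C ⥤ C`, then the structure map `f` is an
isomorphism. -/
theorem lambek_final_coalgebra {C : Type*} [Category C] (F : C ⥤ C)
    (A : Endofunctor.Coalgebra F) (h : Limits.IsTerminal A) :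
    IsIso A.str :=
  Endofunctor.Coalgebra.Terminal.str_isIso h
end

section
/- The coherence space N of strict natural numbers dictated by the least fixed point of E ↦ 1 ⊕ E has web ℕ with coherence being equality. The map Θ on totality candidates of N defined by Θ(T) = {{0}} ∪ { x+1 : x ∈ T } (where x+1 = {n+1 : n ∈ x}) has least fixed point T = { {n} : n ∈ ℕ }. In particular, T⊥ = { ℕ } and T⊥⊥ = T. -/
/-- A coherence space: a web together with a reflexive symmetric coherence
relation supported on the web. -/
structure CohSpace (α : Type*) where
  web : Set α
  coh : α → α → Prop
  coh_mem_left : ∀ {a a'}, coh a a' → a ∈ web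
  coh_mem_right : ∀ {a a'}, coh a a' → a' ∈ web
  coh_refl : ∀ a ∈ web, coh a a
  coh_symm : ∀ {a a'}, coh a a' → coh a' a

namespace CohSpace

variable {α : Type*} {β : Type*}

/-- The subspace order `E ⊑ F`. -/
def Subcoh (E F : CohSpace α) : Prop :=
  E.web ⊆ F.web ∧ ∀ a ∈ E.web, ∀ a' ∈ E.web, (E.coh a a' ↔ F.coh a a')

end CohSpace
namespace CohSpace

variable {α : Type*} {β : Type*}

/-- The linear negation (dual) of a coherence space: same web, incoherence
`a ≎ a'` iff `a ≍ a' → a = a'`. -/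
def dual (E : CohSpace α) : CohSpace α where
  web := E.web
  coh a a' := a ∈ E.web ∧ a' ∈ E.web ∧ (E.coh a a' → a = a')
  coh_mem_left h := h.1
  coh_mem_right h := h.2.1
  coh_refl a ha := ⟨ha, ha, fun _ => rfl⟩
  coh_symm h := ⟨h.2.1, h.1, fun hc => (h.2.2 (E.coh_symm hc)).symm⟩

end CohSpace
namespace CohSpace

variable {α : Type*} {β : Type*}

/-- A clique of a coherence space. -/
def Clique (E : CohSpace α) (u : Set α) : Prop :=
  u ⊆ E.web ∧ ∀ a ∈ u, ∀ a' ∈ u, E.coh a a'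

/-- The orthogonal of a set of cliques: `𝒜⊥` consists of the cliques of
`E⊥` meeting every member of `𝒜`. -/
def orth (E : CohSpace α) (𝒜 : Set (Set α)) : Set (Set α) :=
  {x' | E.dual.Clique x' ∧ ∀ x ∈ 𝒜, (x ∩ x').Nonempty}

end CohSpace
namespace CohSpace

variable {α : Type*} {β : Type*}

/-- Totality candidates: biorthogonally closed sets of cliques of `E`. -/
def Tot (E : CohSpace α) : Set (Set (Set α)) :=
  {T | (∀ x ∈ T, E.Clique x) ∧ E.dual.orth (E.orth T) = T}

end CohSpace

namespace CohSpace

/-- The coherence space of strict natural numbers: web `ℕ`, coherence is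
equality. -/
def natCoh : CohSpace ℕ where
  web := Set.univ
  coh n m := n = m
  coh_mem_left _ := Set.mem_univ _
  coh_mem_right _ := Set.mem_univ _
  coh_refl _ _ := rfl
  coh_symm h := h.symm

/-- The operator `Θ(T) = {{0}} ∪ {x+1 : x ∈ T}` on sets of cliques of
`natCoh`. -/
def natStep (T : Set (Set ℕ)) : Set (Set ℕ) :=
  insert {0} ((fun x : Set ℕ => (· + 1) '' x) '' T)

/-- The set of singletons `{n}`. -/
def natTot : Set (Set ℕ) :=
  Set.range fun n : ℕ => ({n} : Set ℕ)

end CohSpace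

/-!
A set meeting every singleton `{n}` contains all of `ℕ`, so the orthogonal of the singletons is
`{ℕ}`; a clique of `N` meeting `ℕ` is a nonempty subsingleton, i.e. a singleton, which gives
biorthogonal closure. `Θ` fixes the singletons because `{n} + 1 = {n + 1}`, and any fixed point of
`Θ` contains `{0}` and is closed under `x ↦ x + 1`, hence contains every `{n}`.
-/

namespace CohSpace

section General

variable {α : Type*} (E : CohSpace α)

theorem dual_dual : E.dual.dual = E := by
  obtain ⟨web, coh, hl, hr, hrefl, _⟩ := E
  simp only [dual, mk.injEq, true_and]
  funext a a'
  refine propext ⟨fun ⟨ha, ha', h⟩ => ?_, fun hc => ⟨hl hc, hr hc, fun ⟨_, _, h⟩ => h hc⟩⟩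
  -- if `a` and `a'` were incoherent in `E`, they would be coherent in `E⊥`, forcing `a = a'`
  by_contra hc
  exact hc (h ⟨ha, ha', fun hc' => absurd hc' hc⟩ ▸ hrefl a ha)

theorem clique_singleton {a : α} (ha : a ∈ E.web) : E.Clique {a} := by
  refine ⟨Set.singleton_subset_iff.mpr ha, ?_⟩
  rintro _ rfl _ rfl
  exact E.coh_refl _ ha

theorem orth_image_singleton_web (hweb : E.dual.Clique E.web) :
    E.orth ((fun a => ({a} : Set α)) '' E.web) = {E.web} := by
  ext x'
  simp only [orth, Set.forall_mem_image, Set.singleton_inter_nonempty, Set.mem_ofPred_eq,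
    Set.mem_singleton_iff]
  refine ⟨fun ⟨hx', hmem⟩ => hx'.1.antisymm hmem, ?_⟩
  rintro rfl
  exact ⟨hweb, fun _ => id⟩

theorem dual_orth_singleton_web : E.dual.orth {E.web} = {x | E.Clique x ∧ x.Nonempty} := by
  ext x
  simp only [orth, dual_dual, Set.mem_singleton_iff, forall_eq, Set.mem_ofPred_eq]
  exact and_congr_right fun hx => by rw [Set.inter_eq_right.mpr hx.1]

end General

theorem natCoh_clique_iff {x : Set ℕ} : natCoh.Clique x ↔ x.Subsingleton :=
  ⟨fun hx _ ha _ ha' => hx.2 _ ha _ ha', fun hx => ⟨Set.subset_univ x, hx⟩⟩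

theorem natTot_eq_image_singleton_web : natTot = (fun n => ({n} : Set ℕ)) '' natCoh.web :=
  Set.image_univ.symm

theorem natCoh_orth_natTot : natCoh.orth natTot = {Set.univ} := by
  rw [natTot_eq_image_singleton_web]
  exact natCoh.orth_image_singleton_web ⟨subset_rfl, fun _ _ _ _ => ⟨trivial, trivial, id⟩⟩

theorem natCoh_dual_orth_univ : natCoh.dual.orth {Set.univ} = natTot := by
  ext x
  rw [show natCoh.dual.orth {Set.univ} = _ from natCoh.dual_orth_singleton_web,
    Set.mem_ofPred_eq, natCoh_clique_iff, and_comm,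
    ← Set.exists_eq_singleton_iff_nonempty_subsingleton]
  exact exists_congr fun _ => eq_comm

theorem natTot_mem_tot : natTot ∈ natCoh.Tot := by
  refine ⟨?_, by rw [natCoh_orth_natTot, natCoh_dual_orth_univ]⟩
  rintro _ ⟨n, rfl⟩
  exact natCoh.clique_singleton trivial

theorem natStep_natTot : natStep natTot = natTot := by
  ext x
  simp only [natStep, natTot, Set.mem_insert_iff, Set.mem_image, Set.mem_range]
  constructor
  · rintro (rfl | ⟨_, ⟨n, rfl⟩, rfl⟩)
    exacts [⟨0, rfl⟩, ⟨n + 1, by rw [Set.image_singleton]⟩]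
  · rintro ⟨_ | n, rfl⟩
    exacts [Or.inl rfl, Or.inr ⟨{n}, ⟨n, rfl⟩, Set.image_singleton⟩]

theorem natTot_subset_of_natStep_eq {T : Set (Set ℕ)} (hT : natStep T = T) : natTot ⊆ T := by
  rintro _ ⟨n, rfl⟩
  induction n with
  | zero => exact hT ▸ Set.mem_insert _ _
  | succ n ih => exact hT ▸ Or.inr ⟨{n}, ih, Set.image_singleton⟩

end CohSpace

open CohSpace in
/-- The coherence space of strict natural numbers has web `ℕ` with coherence
equality; the operator `Θ` has least fixed point `{ {n} : n ∈ ℕ }` among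
totality candidates; its orthogonal is `{ℕ}` and it is biorthogonally
closed. -/
theorem nat_tot_least_fixed_point :
    (natCoh.web = Set.univ ∧ ∀ n m : ℕ, natCoh.coh n m ↔ n = m) ∧
    natTot ∈ natCoh.Tot ∧
    natStep natTot = natTot ∧
    (∀ T ∈ natCoh.Tot, natStep T = T → natTot ⊆ T) ∧
    natCoh.orth natTot = {Set.univ} ∧
    natCoh.dual.orth (natCoh.orth natTot) = natTot :=
  ⟨⟨rfl, fun _ _ => Iff.rfl⟩, natTot_mem_tot, natStep_natTot,
    fun _ _ => natTot_subset_of_natStep_eq, natCoh_orth_natTot,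
    by rw [natCoh_orth_natTot, natCoh_dual_orth_univ]⟩
end

section
/- In the call-by-value Gödel's System T with natural number type, λ-abstraction, application, successor, recursor Rec, and let-binding, with weak-head reduction ⇝: every closed, weak-head-normal term of type nat is a numeral n̄ for some n ∈ ℕ; consequently, weak-head reduction is normalizing on closed terms of type nat (every closed term of type nat reduces to a numeral). -/
/-- Types of System T: `nat` and function types. -/
inductive Ty : Type
  | nat : Ty
  | arrow : Ty → Ty → Ty

/-- Terms of System T (de Bruijn indices): numerals, variables, application,
λ-abstraction, successor, recursor, and let-binding. -/
inductive Tm : Type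
  | num : ℕ → Tm
  | var : ℕ → Tm
  | app : Tm → Tm → Tm
  | lam : Ty → Tm → Tm
  | succ : Tm → Tm
  | recN : Tm → Tm → Tm → Tm
  | lett : Tm → Tm → Tm

namespace Tm

/-- Substitution of a (closed) term for de Bruijn index `k`. -/
def subst (u : Tm) : ℕ → Tm → Tm
  | _, num n => num n
  | k, var i => if i = k then u else if k < i then var (i - 1) else var i
  | k, app s t => app (subst u k s) (subst u k t)
  | k, lam σ s => lam σ (subst u (k + 1) s)
  | k, succ s => succ (subst u k s)
  | k, recN s t v => recN (subst u k s) (subst u k t) (subst u k v)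
  | k, lett s t => lett (subst u k s) (subst u (k + 1) t)

/-- Typing judgment `Γ ⊢ s : σ`. -/
inductive HasTy : List Ty → Tm → Ty → Prop
  | num (Γ : List Ty) (n : ℕ) : HasTy Γ (num n) Ty.nat
  | var (Γ : List Ty) (i : ℕ) (σ : Ty) (h : Γ[i]? = some σ) :
      HasTy Γ (var i) σ
  | app (Γ : List Ty) (s t : Tm) (σ τ : Ty) (hs : HasTy Γ s (Ty.arrow σ τ))
      (ht : HasTy Γ t σ) : HasTy Γ (app s t) τ
  | lam (Γ : List Ty) (s : Tm) (σ τ : Ty) (hs : HasTy (σ :: Γ) s τ) :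
      HasTy Γ (lam σ s) (Ty.arrow σ τ)
  | succ (Γ : List Ty) (s : Tm) (hs : HasTy Γ s Ty.nat) :
      HasTy Γ (succ s) Ty.nat
  | recN (Γ : List Ty) (s t u : Tm) (σ : Ty) (hs : HasTy Γ s Ty.nat)
      (ht : HasTy Γ t σ) (hu : HasTy Γ u (Ty.arrow Ty.nat (Ty.arrow σ σ))) :
      HasTy Γ (recN s t u) σ
  | lett (Γ : List Ty) (s t : Tm) (σ : Ty) (hs : HasTy Γ s Ty.nat)
      (ht : HasTy (Ty.nat :: Γ) t σ) : HasTy Γ (lett s t) σ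

/-- Weak-head reduction. -/
inductive Step : Tm → Tm → Prop
  | beta (σ : Ty) (s t : Tm) : Step (app (lam σ s) t) (subst t 0 s)
  | lett (n : ℕ) (s : Tm) : Step (lett (num n) s) (subst (num n) 0 s)
  | succ (n : ℕ) : Step (succ (num n)) (num (n + 1))
  | recZero (t u : Tm) : Step (recN (num 0) t u) t
  | recSucc (n : ℕ) (t u : Tm) :
      Step (recN (num (n + 1)) t u) (app (app u (num n)) (recN (num n) t u))
  | appHead (s s' t : Tm) : Step s s' → Step (app s t) (app s' t)
  | lettHead (s s' t : Tm) : Step s s' → Step (lett s t) (lett s' t)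
  | succHead (s s' : Tm) : Step s s' → Step (succ s) (succ s')
  | recHead (s s' t u : Tm) : Step s s' → Step (recN s t u) (recN s' t u)

end Tm

/-! Tait's reducibility method. A closed term is reducible at `nat` if it reduces to a numeral,
and at `σ → τ` if it sends reducible closed arguments to reducible results. Reducibility is
closed under weak-head expansion, and every well-typed term becomes reducible under any
substitution of reducible closed terms for its free variables (induction on the typing
derivation, with `Rec n̄ t u` handled by induction on `n`). For a closed term of type `nat` this
says that it reduces to a numeral; a weak-head normal one must then already be that numeral. -/

open Relation

namespace Tm

def Closed : ℕ → Tm → Prop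
  | _, num _ => True
  | k, var i => i < k
  | k, app s t => Closed k s ∧ Closed k t
  | k, lam _ s => Closed (k + 1) s
  | k, succ s => Closed k s
  | k, recN s t u => Closed k s ∧ Closed k t ∧ Closed k u
  | k, lett s t => Closed k s ∧ Closed (k + 1) t

theorem Closed.mono {s : Tm} {k j : ℕ} (hs : Closed k s) (hkj : k ≤ j) : Closed j s := by
  induction s generalizing k j with
  | num => trivial
  | var => exact lt_of_lt_of_le hs hkj
  | app _ _ ihs iht => exact ⟨ihs hs.1 hkj, iht hs.2 hkj⟩
  | lam _ _ ih => exact ih hs (by omega)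
  | succ _ ih => exact ih hs hkj
  | recN _ _ _ ihs iht ihu => exact ⟨ihs hs.1 hkj, iht hs.2.1 hkj, ihu hs.2.2 hkj⟩
  | lett _ _ ihs iht => exact ⟨ihs hs.1 hkj, iht hs.2 (by omega)⟩

theorem subst_var_lt (u : Tm) {i k : ℕ} (h : i < k) : subst u k (var i) = var i := by
  simp only [subst, if_neg (Nat.ne_of_lt h), if_neg (Nat.not_lt_of_gt h)]

theorem subst_var_gt (u : Tm) {i k : ℕ} (h : k < i) : subst u k (var i) = var (i - 1) := by
  simp only [subst, if_neg (Nat.ne_of_gt h), if_pos h]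

theorem subst_of_closed (u : Tm) {s : Tm} {k j : ℕ} (hs : Closed k s) (hkj : k ≤ j) :
    subst u j s = s := by
  induction s generalizing k j with
  | num => rfl
  | var => exact subst_var_lt u (lt_of_lt_of_le hs hkj)
  | app _ _ ihs iht => simp only [subst, ihs hs.1 hkj, iht hs.2 hkj]
  | lam _ _ ih => simp only [subst, ih hs (Nat.succ_le_succ hkj)]
  | succ _ ih => simp only [subst, ih hs hkj]
  | recN _ _ _ ihs iht ihu => simp only [subst, ihs hs.1 hkj, iht hs.2.1 hkj, ihu hs.2.2 hkj]
  | lett _ _ ihs iht => simp only [subst, ihs hs.1 hkj, iht hs.2 (Nat.succ_le_succ hkj)]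

theorem Closed.subst {u s : Tm} {k m : ℕ} (hu : Closed 0 u) (hs : Closed (m + 1) s)
    (hkm : k ≤ m) : Closed m (subst u k s) := by
  induction s generalizing k m with
  | num => trivial
  | var i =>
    simp only [Tm.subst]
    split_ifs
    · exact hu.mono (Nat.zero_le m)
    all_goals simp only [Closed] at hs ⊢; omega
  | app _ _ ihs iht => exact ⟨ihs hs.1 hkm, iht hs.2 hkm⟩
  | lam _ _ ih => exact ih hs (by omega)
  | succ _ ih => exact ih hs hkm
  | recN _ _ _ ihs iht ihu => exact ⟨ihs hs.1 hkm, iht hs.2.1 hkm, ihu hs.2.2 hkm⟩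
  | lett _ _ ihs iht => exact ⟨ihs hs.1 hkm, iht hs.2 (by omega)⟩

theorem subst_subst {t u : Tm} (ht : Closed 0 t) (hu : Closed 0 u) (s : Tm) (k : ℕ) :
    subst t k (subst u (k + 1) s) = subst u k (subst t k s) := by
  induction s generalizing k with
  | num => rfl
  | var i =>
    rcases Nat.lt_trichotomy i k with h | rfl | h
    · rw [subst_var_lt u (by omega), subst_var_lt t h, subst_var_lt u h]
    · rw [subst_var_lt u (by omega)]
      simp only [subst, if_pos, subst_of_closed u ht (Nat.zero_le i)]
    · rcases Nat.lt_or_ge (k + 1) i with h' | h'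
      · rw [subst_var_gt u h', subst_var_gt t (by omega), subst_var_gt t h,
          subst_var_gt u (by omega)]
      · obtain rfl : i = k + 1 := by omega
        rw [subst_var_gt t h]
        simp only [subst, if_pos, Nat.add_sub_cancel, subst_of_closed t hu (Nat.zero_le k)]
  | app _ _ ihs iht => simp only [subst, ihs, iht]
  | lam _ _ ih => simp only [subst, ih]
  | succ _ ih => simp only [subst, ih]
  | recN _ _ _ ihs iht ihu => simp only [subst, ihs, iht, ihu]
  | lett _ _ ihs iht => simp only [subst, ihs, iht]

/-- Substitutes `γ[0], γ[1], …` for the variables `k, k + 1, …` (one at a time: each `subst` shifts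
the remaining variables down by one). -/
def msubst : List Tm → ℕ → Tm → Tm
  | [], _, s => s
  | u :: γ, k, s => msubst γ k (subst u k s)

section msubst

variable (γ : List Tm) (k : ℕ)

@[simp] theorem msubst_num (n : ℕ) : msubst γ k (num n) = num n := by
  induction γ <;> simp only [msubst, subst, *]

@[simp] theorem msubst_app (s t : Tm) :
    msubst γ k (app s t) = app (msubst γ k s) (msubst γ k t) := by
  induction γ generalizing s t <;> simp only [msubst, subst, *]

@[simp] theorem msubst_lam (σ : Ty) (s : Tm) :
    msubst γ k (lam σ s) = lam σ (msubst γ (k + 1) s) := by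
  induction γ generalizing s <;> simp only [msubst, subst, *]

@[simp] theorem msubst_succ (s : Tm) : msubst γ k (succ s) = succ (msubst γ k s) := by
  induction γ generalizing s <;> simp only [msubst, subst, *]

@[simp] theorem msubst_recN (s t u : Tm) :
    msubst γ k (recN s t u) = recN (msubst γ k s) (msubst γ k t) (msubst γ k u) := by
  induction γ generalizing s t u <;> simp only [msubst, subst, *]

@[simp] theorem msubst_lett (s t : Tm) :
    msubst γ k (lett s t) = lett (msubst γ k s) (msubst γ (k + 1) t) := by
  induction γ generalizing s t <;> simp only [msubst, subst, *]

end msubst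

theorem msubst_of_closed (γ : List Tm) {s : Tm} (hs : Closed 0 s) (k : ℕ) :
    msubst γ k s = s := by
  induction γ with
  | nil => rfl
  | cons u γ ih => rw [msubst, subst_of_closed u hs (Nat.zero_le k), ih]

theorem msubst_var {γ : List Tm} (hγ : ∀ u ∈ γ, Closed 0 u) {i : ℕ} (hi : i < γ.length) :
    msubst γ 0 (var i) = γ[i] := by
  induction γ generalizing i with
  | nil => simp at hi
  | cons u γ ih =>
    rw [List.forall_mem_cons] at hγ
    cases i with
    | zero => simp only [msubst, subst, if_pos, msubst_of_closed γ hγ.1, List.getElem_cons_zero]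
    | succ i =>
      rw [msubst, subst_var_gt u (Nat.succ_pos i), Nat.succ_sub_one, ih hγ.2]
      rfl

theorem subst_msubst {t : Tm} (ht : Closed 0 t) {γ : List Tm} (hγ : ∀ u ∈ γ, Closed 0 u)
    (k : ℕ) (s : Tm) : subst t k (msubst γ (k + 1) s) = msubst γ k (subst t k s) := by
  induction γ generalizing s with
  | nil => rfl
  | cons u γ ih =>
    rw [List.forall_mem_cons] at hγ
    rw [msubst, msubst, ih hγ.2, subst_subst ht hγ.1]

theorem Closed.msubst {γ : List Tm} (hγ : ∀ u ∈ γ, Closed 0 u) {s : Tm}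
    (hs : Closed γ.length s) : Closed 0 (msubst γ 0 s) := by
  induction γ generalizing s with
  | nil => exact hs
  | cons u γ ih =>
    rw [List.forall_mem_cons] at hγ
    exact ih hγ.2 (hγ.1.subst hs (Nat.zero_le _))

theorem HasTy.closed {Γ : List Ty} {s : Tm} {σ : Ty} (h : HasTy Γ s σ) : Closed Γ.length s := by
  induction h with
  | num => trivial
  | var _ _ _ hi => exact (List.getElem?_eq_some_iff.mp hi).1
  | app _ _ _ _ _ _ _ ihs iht => exact ⟨ihs, iht⟩
  | lam _ _ _ _ _ ih => exact ih
  | succ _ _ _ ih => exact ih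
  | recN _ _ _ _ _ _ _ _ ihs iht ihu => exact ⟨ihs, iht, ihu⟩
  | lett _ _ _ _ _ _ ihs iht => exact ⟨ihs, iht⟩

theorem HasTy.closed_msubst {Γ : List Ty} {s : Tm} {σ : Ty} (h : HasTy Γ s σ) {γ : List Tm}
    (hγ : ∀ u ∈ γ, Closed 0 u) (hlen : γ.length = Γ.length) : Closed 0 (msubst γ 0 s) :=
  Closed.msubst hγ (hlen ▸ h.closed)

/-- `subst` does not shift the term it substitutes, so it is only sound for closed terms; this is
why arguments at arrow types are required to be closed. -/
def Red : Ty → Tm → Prop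
  | Ty.nat, s => ∃ n : ℕ, ReflTransGen Step s (num n)
  | Ty.arrow σ τ, s => ∀ t : Tm, Closed 0 t → Red σ t → Red τ (app s t)

theorem red_of_step {σ : Ty} {s s' : Tm} (h : Step s s') (hs' : Red σ s') : Red σ s := by
  induction σ generalizing s s' with
  | nat =>
    obtain ⟨n, hn⟩ := hs'
    exact ⟨n, hn.head h⟩
  | arrow σ τ _ ihτ => exact fun t ht hrt => ihτ (Step.appHead s s' t h) (hs' t ht hrt)

theorem red_of_reflTransGen {σ : Ty} {s s' : Tm} (h : ReflTransGen Step s s')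
    (hs' : Red σ s') : Red σ s := by
  induction h using ReflTransGen.head_induction_on with
  | refl => exact hs'
  | head hstep _ ih => exact red_of_step hstep ih

theorem reflTransGen_map_of_step (f : Tm → Tm) (hf : ∀ s s', Step s s' → Step (f s) (f s'))
    {s s' : Tm} (h : ReflTransGen Step s s') : ReflTransGen Step (f s) (f s') :=
  ReflTransGen.lift f hf _ _ h

theorem red_num (n : ℕ) : Red Ty.nat (num n) := ⟨n, ReflTransGen.refl⟩

theorem red_recN_num {σ : Ty} {t u : Tm} (htc : Closed 0 t) (huc : Closed 0 u) (ht : Red σ t)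
    (hu : Red (Ty.arrow Ty.nat (Ty.arrow σ σ)) u) (n : ℕ) : Red σ (recN (num n) t u) := by
  induction n with
  | zero => exact red_of_step (Step.recZero t u) ht
  | succ n ih =>
    exact red_of_step (Step.recSucc n t u)
      (hu (num n) trivial (red_num n) _ ⟨trivial, htc, huc⟩ ih)

theorem red_var {Γ : List Ty} {γ : List Tm} (hγ : ∀ u ∈ γ, Closed 0 u)
    (hred : List.Forall₂ Red Γ γ) {i : ℕ} {σ : Ty} (hi : Γ[i]? = some σ) :
    Red σ (msubst γ 0 (var i)) := by
  obtain ⟨hiΓ, rfl⟩ := List.getElem?_eq_some_iff.mp hi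
  have hiγ : i < γ.length := hred.length_eq ▸ hiΓ
  rw [msubst_var hγ hiγ]
  exact (List.forall₂_iff_get.mp hred).2 i hiΓ hiγ

/-- The fundamental lemma of reducibility. -/
theorem HasTy.red_msubst {Γ : List Ty} {s : Tm} {σ : Ty} (h : HasTy Γ s σ) {γ : List Tm}
    (hγ : ∀ u ∈ γ, Closed 0 u) (hred : List.Forall₂ Red Γ γ) : Red σ (msubst γ 0 s) := by
  induction h generalizing γ with
  | num => rw [msubst_num]; exact red_num _
  | var _ _ _ hi => exact red_var hγ hred hi
  | app _ _ _ _ _ _ ht ihs iht =>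
    rw [msubst_app]
    exact ihs hγ hred _ (ht.closed_msubst hγ hred.length_eq.symm) (iht hγ hred)
  | lam _ s σ τ _ ih =>
    rw [msubst_lam]
    intro t ht hrt
    apply red_of_step (Step.beta σ _ t)
    rw [subst_msubst ht hγ]
    exact ih (List.forall_mem_cons.mpr ⟨ht, hγ⟩) (.cons hrt hred)
  | succ _ _ _ ih =>
    obtain ⟨n, hn⟩ := ih hγ hred
    rw [msubst_succ]
    exact ⟨n + 1,
      (reflTransGen_map_of_step Tm.succ (fun _ _ => Step.succHead _ _) hn).tail (Step.succ n)⟩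
  | recN _ _ t u _ _ ht hu ihs iht ihu =>
    obtain ⟨n, hn⟩ := ihs hγ hred
    have hlen := hred.length_eq.symm
    rw [msubst_recN]
    refine red_of_reflTransGen
      (reflTransGen_map_of_step (fun s => Tm.recN s _ _) (fun _ _ => Step.recHead _ _ _ _) hn) ?_
    exact red_recN_num (ht.closed_msubst hγ hlen) (hu.closed_msubst hγ hlen) (iht hγ hred)
      (ihu hγ hred) n
  | lett _ _ t _ _ _ ihs iht =>
    obtain ⟨n, hn⟩ := ihs hγ hred
    rw [msubst_lett]
    refine red_of_reflTransGen
      (reflTransGen_map_of_step (fun s => Tm.lett s _) (fun _ _ => Step.lettHead _ _ _) hn) ?_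
    apply red_of_step (Step.lett n _)
    have hnum : Closed 0 (Tm.num n) := trivial
    rw [subst_msubst hnum hγ]
    exact iht (List.forall_mem_cons.mpr ⟨hnum, hγ⟩) (.cons (red_num n) hred)

end Tm

/-- Every closed weak-head-normal term of type `nat` is a numeral, and
weak-head reduction is normalizing on closed terms of type `nat`: every
closed term of type `nat` reduces to a numeral. -/
theorem systemT_normalization :
    (∀ s : Tm, Tm.HasTy [] s Ty.nat → (∀ s' : Tm, ¬ Tm.Step s s') →
      ∃ n : ℕ, s = Tm.num n) ∧
    (∀ s : Tm, Tm.HasTy [] s Ty.nat →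
      ∃ n : ℕ, Relation.ReflTransGen Tm.Step s (Tm.num n)) := by
  have normalizing (s : Tm) (hs : Tm.HasTy [] s Ty.nat) :
      ∃ n : ℕ, ReflTransGen Tm.Step s (Tm.num n) :=
    hs.red_msubst (γ := []) (List.forall_mem_nil _) .nil
  refine ⟨fun s hs hnf => ?_, normalizing⟩
  obtain ⟨n, hn⟩ := normalizing s hs
  rcases hn.cases_head with rfl | ⟨s', hs', -⟩
  · exact ⟨n, rfl⟩
  · exact absurd hs' (hnf s')
end
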